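/- Let (α_n)_{n∈ℕ} be nonnegative weights and let v ∈ ℓ²(ℕ) be a real-valued sequence. Then the hard-shrinked sequence ω̂ with ω̂_n = v_n·1_{|v_n| > √α_n} is an exact minimizer of the functional I_0(v, ω) = ‖v − ω‖²_{ℓ²} + ∑_n α_n · 1_{ω_n ≠ 0} over all ω ∈ ℓ²(ℕ): for every ω ∈ ℓ²(ℕ), I_0(v, ω̂) ≤ I_0(v, ω). Moreover, for v_n ≠ 0 this ω̂_n equals ϱ^{(0)}_{h,s}(v_n, α_n|v_n|^{−1}) where ϱ^{(0)}_{h,s}(x, α) = x·1_{|x| > α} (the q = 0 instance of the interpolating rule, using c_0 = 1). -/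
import Mathlib


open scoped ENNReal

noncomputable section

/-- Hard-shrinkage `ϱ_h(x, β) = x·1_{|x| > β}`; this is also the `q = 0` instance
`ϱ^{(0)}_{h,s}` of the interpolating rule (with `c_0 = 1`). -/
def hardShrink (x β : ℝ) : ℝ := if β < |x| then x else 0

/-- The functional `I_0(v, ω) = ‖v − ω‖²_{ℓ²} + ∑_n α_n·1_{ω_n ≠ 0}` (convention `0⁰ = 0`),
valued in `ℝ≥0∞`. -/
def Izero (α : ℕ → ℝ) (v ω : lp (fun _ : ℕ => ℝ) 2) : ℝ≥0∞ :=
  ENNReal.ofReal (‖v - ω‖ ^ 2)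
    + ∑' n, (if (ω : ∀ _ : ℕ, ℝ) n ≠ 0 then ENNReal.ofReal (α n) else 0)

-- pointwise optimality of hard shrinkage
lemma pointwise_opt (a t x : ℝ) (ht : 0 ≤ t) :
    (a - hardShrink a (Real.sqrt t)) ^ 2 + (if hardShrink a (Real.sqrt t) ≠ 0 then t else 0)
      ≤ (a - x) ^ 2 + (if x ≠ 0 then t else 0) := by
  unfold hardShrink
  by_cases h : Real.sqrt t < |a|
  · have ha : a ≠ 0 := by
      intro h0; rw [h0] at h; simp [Real.sqrt_nonneg t] at h
      exact absurd h (not_lt.2 (Real.sqrt_nonneg t))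
    simp only [h, if_true, sub_self, ha, ne_eq, not_false_eq_true, if_true]
    by_cases hx : x = 0
    · simp only [hx, sub_zero, ne_eq, not_true_eq_false, if_false, add_zero]
      have : t < a ^ 2 := by
        have := Real.sq_sqrt ht
        nlinarith [abs_nonneg a, sq_abs a, Real.sqrt_nonneg t]
      nlinarith
    · simp only [ne_eq, hx, not_false_eq_true, if_true]
      nlinarith [sq_nonneg (a - x)]
  · simp only [h, if_false, sub_zero, ne_eq, not_true_eq_false, if_false, add_zero]
    have ha2 : a ^ 2 ≤ t := by
      have h' : |a| ≤ Real.sqrt t := not_lt.1 h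
      have := Real.sq_sqrt ht
      nlinarith [abs_nonneg a, sq_abs a]
    by_cases hx : x = 0
    · simp [hx]
    · simp only [ne_eq, hx, not_false_eq_true, if_true]
      nlinarith [sq_nonneg (a - x)]

lemma Izero_eq (α : ℕ → ℝ) (v ω : lp (fun _ : ℕ => ℝ) 2) :
    Izero α v ω = ∑' n, (ENNReal.ofReal (((v : ∀ _ : ℕ, ℝ) n - (ω : ∀ _ : ℕ, ℝ) n) ^ 2)
      + (if (ω : ∀ _ : ℕ, ℝ) n ≠ 0 then ENNReal.ofReal (α n) else 0)) := by
  rw [ENNReal.tsum_add, Izero]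
  congr 1
  have hp : (0:ℝ) < (2 : ℝ≥0∞).toReal := by norm_num
  have h1 := lp.norm_rpow_eq_tsum hp (v - ω)
  have hsum : Summable fun n => ‖(↑(v - ω) : ∀ _ : ℕ, ℝ) n‖ ^ (2 : ℝ≥0∞).toReal :=
    (lp.memℓp (v - ω)).summable hp
  have h2 : ENNReal.ofReal (‖v - ω‖ ^ (2 : ℝ≥0∞).toReal)
      = ∑' n, ENNReal.ofReal (‖(↑(v - ω) : ∀ _ : ℕ, ℝ) n‖ ^ (2 : ℝ≥0∞).toReal) := by
    rw [h1, ENNReal.ofReal_tsum_of_nonneg (fun n => by positivity) hsum]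
  have htr : (2 : ℝ≥0∞).toReal = (2:ℝ) := by norm_num
  rw [htr] at h2
  have : ‖v - ω‖ ^ (2:ℕ) = ‖v - ω‖ ^ (2:ℝ) := by
    rw [← Real.rpow_natCast]; norm_num
  rw [this, h2]
  congr 1
  funext n
  have hco : (↑(v - ω) : ∀ _ : ℕ, ℝ) n = (v : ∀ _ : ℕ, ℝ) n - (ω : ∀ _ : ℕ, ℝ) n := by
    simp [lp.coeFn_sub]
  rw [hco]
  congr 1
  rw [Real.norm_eq_abs, ← Real.rpow_natCast]
  norm_num [sq_abs]

theorem hard_shrinkage_exact_minimizer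
    (α : ℕ → ℝ) (hα : ∀ n, 0 ≤ α n) (v : lp (fun _ : ℕ => ℝ) 2) :
    ∃ what : lp (fun _ : ℕ => ℝ) 2,
      -- ω̂_n = v_n·1_{|v_n| > √α_n}
      (∀ n : ℕ, (what : ∀ _ : ℕ, ℝ) n = hardShrink ((v : ∀ _ : ℕ, ℝ) n) (Real.sqrt (α n))) ∧
      -- ω̂ is an exact minimizer of I_0(v, ·) over ℓ²
      (∀ ω : lp (fun _ : ℕ => ℝ) 2, Izero α v what ≤ Izero α v ω) ∧
      -- moreover, for v_n ≠ 0 this coincides with ϱ^{(0)}_{h,s}(v_n, α_n |v_n|⁻¹)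
      (∀ n : ℕ, (v : ∀ _ : ℕ, ℝ) n ≠ 0 →
        (what : ∀ _ : ℕ, ℝ) n = hardShrink ((v : ∀ _ : ℕ, ℝ) n) (α n * |(v : ∀ _ : ℕ, ℝ) n|⁻¹)) := by
  set f : ℕ → ℝ := fun n => hardShrink ((v : ∀ _ : ℕ, ℝ) n) (Real.sqrt (α n)) with hf
  have hbound : ∀ n, ‖f n‖ ≤ ‖(v : ∀ _ : ℕ, ℝ) n‖ := by
    intro n
    simp only [hf, hardShrink]
    split <;> simp [abs_nonneg]
  have hmem : Memℓp f 2 := by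
    have hp : (0:ℝ) < (2 : ℝ≥0∞).toReal := by norm_num
    apply memℓp_gen
    refine Summable.of_nonneg_of_le (fun n => by positivity) (fun n => ?_)
      ((lp.memℓp v).summable hp)
    exact Real.rpow_le_rpow (norm_nonneg _) (hbound n) (by norm_num)
  refine ⟨⟨f, hmem⟩, fun n => rfl, ?_, ?_⟩
  · intro ω
    rw [Izero_eq, Izero_eq]
    refine ENNReal.tsum_le_tsum fun n => ?_
    have key := pointwise_opt ((v : ∀ _ : ℕ, ℝ) n) (α n) ((ω : ∀ _ : ℕ, ℝ) n) (hα n)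
    have hL : (ENNReal.ofReal (((v : ∀ _ : ℕ, ℝ) n - f n) ^ 2)
        + (if f n ≠ 0 then ENNReal.ofReal (α n) else 0))
        = ENNReal.ofReal (((v : ∀ _ : ℕ, ℝ) n - f n) ^ 2
            + (if f n ≠ 0 then α n else 0)) := by
      rw [ENNReal.ofReal_add (by positivity) (by split <;> simp [hα n])]
      congr 1
      split <;> simp
    have hR : (ENNReal.ofReal (((v : ∀ _ : ℕ, ℝ) n - (ω : ∀ _ : ℕ, ℝ) n) ^ 2)
        + (if (ω : ∀ _ : ℕ, ℝ) n ≠ 0 then ENNReal.ofReal (α n) else 0))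
        = ENNReal.ofReal (((v : ∀ _ : ℕ, ℝ) n - (ω : ∀ _ : ℕ, ℝ) n) ^ 2
            + (if (ω : ∀ _ : ℕ, ℝ) n ≠ 0 then α n else 0)) := by
      rw [ENNReal.ofReal_add (by positivity) (by split <;> simp [hα n])]
      congr 1
      split <;> simp
    calc (ENNReal.ofReal (((v : ∀ _ : ℕ, ℝ) n - f n) ^ 2)
        + (if f n ≠ 0 then ENNReal.ofReal (α n) else 0))
        = ENNReal.ofReal (((v : ∀ _ : ℕ, ℝ) n - f n) ^ 2 + (if f n ≠ 0 then α n else 0)) := hL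
      _ ≤ ENNReal.ofReal (((v : ∀ _ : ℕ, ℝ) n - (ω : ∀ _ : ℕ, ℝ) n) ^ 2
            + (if (ω : ∀ _ : ℕ, ℝ) n ≠ 0 then α n else 0)) := ENNReal.ofReal_le_ofReal key
      _ = _ := hR.symm
  · intro n hvn
    show f n = _
    have habs : 0 < |(v : ∀ _ : ℕ, ℝ) n| := abs_pos.2 hvn
    simp only [hf, hardShrink]
    have : Real.sqrt (α n) < |(v : ∀ _ : ℕ, ℝ) n|
        ↔ α n * |(v : ∀ _ : ℕ, ℝ) n|⁻¹ < |(v : ∀ _ : ℕ, ℝ) n| := by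
      rw [Real.sqrt_lt' habs, ← div_eq_mul_inv, div_lt_iff₀ habs]
      constructor <;> intro h <;> nlinarith
    by_cases h : Real.sqrt (α n) < |(v : ∀ _ : ℕ, ℝ) n|
    · rw [if_pos h, if_pos (this.1 h)]
    · rw [if_neg h, if_neg (fun hh => h (this.2 hh))]
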